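/- Let $P_\alpha = \{t \in \mathbb{R}^4_{\ge 0} : 2t_i + 2t_j - t_3 - t_4 \le 1 \text{ for all distinct } i,j \in \{1,2,3,4\}\}$, let $P = P_\alpha \cap \{2t_1 + t_3 + t_4 \le 1,\ 2t_2 + t_3 + t_4 \le 1\}$, and define the affine maps $f_1, f_2 : \mathbb{R}^4 \to \mathbb{R}^4$ by $f_1(t_1,t_2,t_3,t_4) = \big(t_1,\ \tfrac{1-t_3-t_4}{2},\ \tfrac{1-2t_2+t_3-t_4}{2},\ \tfrac{1-2t_2-t_3+t_4}{2}\big)$ and $f_2(t_1,t_2,t_3,t_4) = \big(\tfrac{1-t_3-t_4}{2},\ t_2,\ \tfrac{1-2t_1+t_3-t_4}{2},\ \tfrac{1-2t_1-t_3+t_4}{2}\big)$. Then: (i) $f_1$ and $f_2$ are affine reflections whose linear parts have determinant $-1$; (ii) $f_1(P_\alpha) = P_\alpha$ and $f_2(P_\alpha) = P_\alpha$; (iii) the function $t \mapsto 1 - 2t_1 - 2t_2 + t_3 + t_4$ is invariant under $f_1$ and $f_2$; (iv) $P_\alpha = P \cup f_1(P) \cup f_2(P)$, and the interiors of $P$,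 $f_1(P)$, $f_2(P)$ are pairwise disjoint. -/

import Mathlib

open MeasureTheory

/-- The polytope `P_α ⊂ ℝ⁴` (0-based indices: `t₃, t₄` are `t 2, t 3`). -/
def Palpha : Set (Fin 4 → ℝ) :=
  {t | (∀ k, 0 ≤ t k) ∧ ∀ i j : Fin 4, i ≠ j → 2 * t i + 2 * t j - t 2 - t 3 ≤ 1}

/-- The subpolytope `P` of `P_α` cut out by `2t₁ + t₃ + t₄ ≤ 1` and `2t₂ + t₃ + t₄ ≤ 1`. -/
def Ppoly : Set (Fin 4 → ℝ) :=
  {t | t ∈ Palpha ∧ 2 * t 0 + t 2 + t 3 ≤ 1 ∧ 2 * t 1 + t 2 + t 3 ≤ 1}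

/-- The reflection `f₁` in the hyperplane `2t₂ + t₃ + t₄ = 1`. -/
noncomputable def f1 : (Fin 4 → ℝ) → (Fin 4 → ℝ) := fun t =>
  ![t 0, (1 - t 2 - t 3) / 2, (1 - 2 * t 1 + t 2 - t 3) / 2, (1 - 2 * t 1 - t 2 + t 3) / 2]

/-- The reflection `f₂` in the hyperplane `2t₁ + t₃ + t₄ = 1`. -/
noncomputable def f2 : (Fin 4 → ℝ) → (Fin 4 → ℝ) := fun t =>
  ![(1 - t 2 - t 3) / 2, t 1, (1 - 2 * t 0 + t 2 - t 3) / 2, (1 - 2 * t 0 - t 2 + t 3) / 2]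

/-! ### Auxiliary lemmas -/

noncomputable def A1mat : Matrix (Fin 4) (Fin 4) ℝ :=
  !![1,0,0,0; 0,0,-(1/2),-(1/2); 0,-1,1/2,-(1/2); 0,-1,-(1/2),1/2]

noncomputable def A2mat : Matrix (Fin 4) (Fin 4) ℝ :=
  !![0,0,-(1/2),-(1/2); 0,1,0,0; -1,0,1/2,-(1/2); -1,0,-(1/2),1/2]

lemma A1mat_det : A1mat.det = -1 := by
  simp [A1mat, Matrix.det_succ_row_zero, Fin.sum_univ_succ]
  norm_num

lemma A2mat_det : A2mat.det = -1 := by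
  simp [A2mat, Matrix.det_succ_row_zero, Fin.sum_univ_succ, Fin.succAbove]
  norm_num

lemma f1_affine : ∀ t, f1 t = A1mat.mulVec t + f1 0 := by
  intro t; funext i
  fin_cases i <;>
    simp [f1, A1mat, Matrix.mulVec, dotProduct, Fin.sum_univ_four] <;> ring

lemma f2_affine : ∀ t, f2 t = A2mat.mulVec t + f2 0 := by
  intro t; funext i
  fin_cases i <;>
    simp [f2, A2mat, Matrix.mulVec, dotProduct, Fin.sum_univ_four] <;> ring

lemma f1_invol : ∀ t, f1 (f1 t) = t := by
  intro t; funext i; fin_cases i <;> simp [f1] <;> ring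

lemma f2_invol : ∀ t, f2 (f2 t) = t := by
  intro t; funext i; fin_cases i <;> simp [f2] <;> ring

lemma mem_Palpha {t : Fin 4 → ℝ} :
    t ∈ Palpha ↔ (0 ≤ t 0 ∧ 0 ≤ t 1 ∧ 0 ≤ t 2 ∧ 0 ≤ t 3) ∧
      (2*t 0 + 2*t 1 - t 2 - t 3 ≤ 1 ∧ 2*t 0 + 2*t 2 - t 2 - t 3 ≤ 1 ∧
       2*t 0 + 2*t 3 - t 2 - t 3 ≤ 1 ∧ 2*t 1 + 2*t 2 - t 2 - t 3 ≤ 1 ∧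
       2*t 1 + 2*t 3 - t 2 - t 3 ≤ 1 ∧ 2*t 2 + 2*t 3 - t 2 - t 3 ≤ 1) := by
  constructor
  · rintro ⟨h0, h⟩
    exact ⟨⟨h0 0, h0 1, h0 2, h0 3⟩,
      h 0 1 (by decide), h 0 2 (by decide), h 0 3 (by decide),
      h 1 2 (by decide), h 1 3 (by decide), h 2 3 (by decide)⟩
  · rintro ⟨⟨a0,a1,a2,a3⟩, b1,b2,b3,b4,b5,b6⟩
    refine ⟨fun k => ?_, fun i j hij => ?_⟩
    · fin_cases k <;> assumption
    · fin_cases i <;> fin_cases j <;> simp_all <;> linarith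

lemma f1_apply (t : Fin 4 → ℝ) :
    f1 t 0 = t 0 ∧ f1 t 1 = (1 - t 2 - t 3) / 2 ∧
    f1 t 2 = (1 - 2 * t 1 + t 2 - t 3) / 2 ∧ f1 t 3 = (1 - 2 * t 1 - t 2 + t 3) / 2 := by
  refine ⟨rfl, rfl, rfl, rfl⟩

lemma f2_apply (t : Fin 4 → ℝ) :
    f2 t 0 = (1 - t 2 - t 3) / 2 ∧ f2 t 1 = t 1 ∧
    f2 t 2 = (1 - 2 * t 0 + t 2 - t 3) / 2 ∧ f2 t 3 = (1 - 2 * t 0 - t 2 + t 3) / 2 := by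
  refine ⟨rfl, rfl, rfl, rfl⟩

lemma f1_mem {t : Fin 4 → ℝ} (ht : t ∈ Palpha) : f1 t ∈ Palpha := by
  rw [mem_Palpha] at ht ⊢
  obtain ⟨⟨a0,a1,a2,a3⟩, b1,b2,b3,b4,b5,b6⟩ := ht
  obtain ⟨e0,e1,e2,e3⟩ := f1_apply t
  rw [e0, e1, e2, e3]
  refine ⟨⟨by linarith, by linarith, by linarith, by linarith⟩,
    by linarith, by linarith, by linarith, by linarith, by linarith, by linarith⟩

lemma f2_mem {t : Fin 4 → ℝ} (ht : t ∈ Palpha) : f2 t ∈ Palpha := by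
  rw [mem_Palpha] at ht ⊢
  obtain ⟨⟨a0,a1,a2,a3⟩, b1,b2,b3,b4,b5,b6⟩ := ht
  obtain ⟨e0,e1,e2,e3⟩ := f2_apply t
  rw [e0, e1, e2, e3]
  refine ⟨⟨by linarith, by linarith, by linarith, by linarith⟩,
    by linarith, by linarith, by linarith, by linarith, by linarith, by linarith⟩

lemma f1_image_Palpha : f1 '' Palpha = Palpha := by
  apply Set.Subset.antisymm
  · rintro x ⟨y, hy, rfl⟩; exact f1_mem hy
  · intro x hx; exact ⟨f1 x, f1_mem hx, f1_invol x⟩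

lemma f2_image_Palpha : f2 '' Palpha = Palpha := by
  apply Set.Subset.antisymm
  · rintro x ⟨y, hy, rfl⟩; exact f2_mem hy
  · intro x hx; exact ⟨f2 x, f2_mem hx, f2_invol x⟩

lemma mem_f1P {x : Fin 4 → ℝ} :
    x ∈ f1 '' Ppoly ↔ x ∈ Palpha ∧ x 0 ≤ x 1 ∧ 1 ≤ 2 * x 1 + x 2 + x 3 := by
  constructor
  · rintro ⟨y, ⟨hy, hy1, hy2⟩, rfl⟩
    obtain ⟨e0,e1,e2,e3⟩ := f1_apply y
    exact ⟨f1_mem hy, by rw [e0, e1]; linarith, by rw [e1, e2, e3]; linarith⟩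
  · rintro ⟨hx, h1, h2⟩
    refine ⟨f1 x, ⟨f1_mem hx, ?_, ?_⟩, f1_invol x⟩ <;>
    · obtain ⟨e0,e1,e2,e3⟩ := f1_apply x
      simp only [e0, e1, e2, e3]
      linarith

lemma mem_f2P {x : Fin 4 → ℝ} :
    x ∈ f2 '' Ppoly ↔ x ∈ Palpha ∧ x 1 ≤ x 0 ∧ 1 ≤ 2 * x 0 + x 2 + x 3 := by
  constructor
  · rintro ⟨y, ⟨hy, hy1, hy2⟩, rfl⟩
    obtain ⟨e0,e1,e2,e3⟩ := f2_apply y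
    exact ⟨f2_mem hy, by rw [e0, e1]; linarith, by rw [e0, e2, e3]; linarith⟩
  · rintro ⟨hx, h1, h2⟩
    refine ⟨f2 x, ⟨f2_mem hx, ?_, ?_⟩, f2_invol x⟩ <;>
    · obtain ⟨e0,e1,e2,e3⟩ := f2_apply x
      simp only [e0, e1, e2, e3]
      linarith

lemma perturb {S : Set (Fin 4 → ℝ)} {x : Fin 4 → ℝ} (hx : x ∈ interior S) (i : Fin 4) :
    ∃ δ : ℝ, 0 < δ ∧ Function.update x i (x i + δ) ∈ S ∧
      Function.update x i (x i - δ) ∈ S := by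
  rw [mem_interior_iff_mem_nhds, Metric.mem_nhds_iff] at hx
  obtain ⟨ε, hε, hball⟩ := hx
  have key : ∀ c : ℝ, |c - x i| < ε → Function.update x i c ∈ S := by
    intro c hc
    apply hball
    rw [Metric.mem_ball, dist_pi_lt_iff hε]
    intro j
    rcases eq_or_ne j i with rfl | hj
    · simpa [Real.dist_eq] using hc
    · simp [Function.update_of_ne hj, hε]
  refine ⟨ε/2, by linarith, key _ ?_, key _ ?_⟩
  · rw [show x i + ε/2 - x i = ε/2 by ring, abs_of_pos (by linarith)]; linarith
  · rw [show x i - ε/2 - x i = -(ε/2) by ring, abs_neg, abs_of_pos (by linarith)]; linarith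

lemma update_ne (x : Fin 4 → ℝ) (i j : Fin 4) (c : ℝ) (h : j ≠ i) :
    Function.update x i c j = x j := Function.update_of_ne h c x

/-- `f₁, f₂` are affine reflections with linear part of determinant `-1`, they leave `P_α`
and the function `1 - 2t₁ - 2t₂ + t₃ + t₄` invariant, and `P_α` is the union of `P`,
`f₁(P)`, `f₂(P)` whose interiors are pairwise disjoint. -/
theorem symmetry_decomposition_of_Palpha :
    -- (i) affine reflections with linear part of determinant -1
    (∃ A : Matrix (Fin 4) (Fin 4) ℝ, A.det = -1 ∧ ∀ t, f1 t = A.mulVec t + f1 0) ∧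
    (∃ A : Matrix (Fin 4) (Fin 4) ℝ, A.det = -1 ∧ ∀ t, f2 t = A.mulVec t + f2 0) ∧
    (∀ t, f1 (f1 t) = t) ∧ (∀ t, f2 (f2 t) = t) ∧
    -- (ii) Pα is invariant
    f1 '' Palpha = Palpha ∧ f2 '' Palpha = Palpha ∧
    -- (iii) invariance of the integrand
    (∀ t, 1 - 2 * f1 t 0 - 2 * f1 t 1 + f1 t 2 + f1 t 3 =
      1 - 2 * t 0 - 2 * t 1 + t 2 + t 3) ∧
    (∀ t, 1 - 2 * f2 t 0 - 2 * f2 t 1 + f2 t 2 + f2 t 3 =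
      1 - 2 * t 0 - 2 * t 1 + t 2 + t 3) ∧
    -- (iv) decomposition with pairwise disjoint interiors
    Palpha = Ppoly ∪ f1 '' Ppoly ∪ f2 '' Ppoly ∧
    interior Ppoly ∩ interior (f1 '' Ppoly) = ∅ ∧
    interior Ppoly ∩ interior (f2 '' Ppoly) = ∅ ∧
    interior (f1 '' Ppoly) ∩ interior (f2 '' Ppoly) = ∅ := by
  -- strict bounds from interior membership
  have hP1 : ∀ x ∈ interior Ppoly, 2 * x 1 + x 2 + x 3 < 1 := by
    intro x hx
    obtain ⟨δ, hδ, hplus, -⟩ := perturb hx 1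
    have h := hplus.2.2
    rw [update_ne _ _ 2 _ (by decide), update_ne _ _ 3 _ (by decide),
      Function.update_self] at h
    linarith
  have hP0 : ∀ x ∈ interior Ppoly, 2 * x 0 + x 2 + x 3 < 1 := by
    intro x hx
    obtain ⟨δ, hδ, hplus, -⟩ := perturb hx 0
    have h := hplus.2.1
    rw [update_ne _ _ 2 _ (by decide), update_ne _ _ 3 _ (by decide),
      Function.update_self] at h
    linarith
  have hF1gt : ∀ x ∈ interior (f1 '' Ppoly), 1 < 2 * x 1 + x 2 + x 3 := by
    intro x hx
    obtain ⟨δ, hδ, -, hminus⟩ := perturb hx 1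
    have h := (mem_f1P.mp hminus).2.2
    rw [update_ne _ _ 2 _ (by decide), update_ne _ _ 3 _ (by decide),
      Function.update_self] at h
    linarith
  have hF1lt : ∀ x ∈ interior (f1 '' Ppoly), x 0 < x 1 := by
    intro x hx
    obtain ⟨δ, hδ, hplus, -⟩ := perturb hx 0
    have h := (mem_f1P.mp hplus).2.1
    rw [update_ne _ _ 1 _ (by decide), Function.update_self] at h
    linarith
  have hF2gt : ∀ x ∈ interior (f2 '' Ppoly), 1 < 2 * x 0 + x 2 + x 3 := by
    intro x hx
    obtain ⟨δ, hδ, -, hminus⟩ := perturb hx 0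
    have h := (mem_f2P.mp hminus).2.2
    rw [update_ne _ _ 2 _ (by decide), update_ne _ _ 3 _ (by decide),
      Function.update_self] at h
    linarith
  have hF2lt : ∀ x ∈ interior (f2 '' Ppoly), x 1 < x 0 := by
    intro x hx
    obtain ⟨δ, hδ, hplus, -⟩ := perturb hx 1
    have h := (mem_f2P.mp hplus).2.1
    rw [update_ne _ _ 0 _ (by decide), Function.update_self] at h
    linarith
  refine ⟨⟨A1mat, A1mat_det, f1_affine⟩, ⟨A2mat, A2mat_det, f2_affine⟩,
    f1_invol, f2_invol, f1_image_Palpha, f2_image_Palpha, ?_, ?_, ?_, ?_, ?_, ?_⟩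
  · intro t
    obtain ⟨e0,e1,e2,e3⟩ := f1_apply t
    rw [e0, e1, e2, e3]; ring
  · intro t
    obtain ⟨e0,e1,e2,e3⟩ := f2_apply t
    rw [e0, e1, e2, e3]; ring
  · -- decomposition
    apply Set.Subset.antisymm
    · intro x hx
      by_cases h1 : 2 * x 0 + x 2 + x 3 ≤ 1
      · by_cases h2 : 2 * x 1 + x 2 + x 3 ≤ 1
        · exact Or.inl (Or.inl ⟨hx, h1, h2⟩)
        · push_neg at h2
          rcases le_total (x 0) (x 1) with h | h
          · exact Or.inl (Or.inr (mem_f1P.mpr ⟨hx, h, h2.le⟩))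
          · exact Or.inr (mem_f2P.mpr ⟨hx, h, by linarith⟩)
      · push_neg at h1
        rcases le_total (x 0) (x 1) with h | h
        · exact Or.inl (Or.inr (mem_f1P.mpr ⟨hx, h, by linarith⟩))
        · exact Or.inr (mem_f2P.mpr ⟨hx, h, h1.le⟩)
    · rintro x ((hx | hx) | hx)
      · exact hx.1
      · exact (mem_f1P.mp hx).1
      · exact (mem_f2P.mp hx).1
  · ext x
    simp only [Set.mem_inter_iff, Set.mem_empty_iff_false, iff_false, not_and]
    intro h1 h2
    exact absurd (hP1 x h1) (not_lt.mpr (hF1gt x h2).le)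
  · ext x
    simp only [Set.mem_inter_iff, Set.mem_empty_iff_false, iff_false, not_and]
    intro h1 h2
    exact absurd (hP0 x h1) (not_lt.mpr (hF2gt x h2).le)
  · ext x
    simp only [Set.mem_inter_iff, Set.mem_empty_iff_false, iff_false, not_and]
    intro h1 h2
    exact absurd (hF1lt x h1) (not_lt.mpr (hF2lt x h2).le)
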